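/- Let σ_cc(p) = ρ_{A₁B₁}(p) ⊗ ρ_{A₂C₁}(p) ⊗ ρ_{B₂C₂}(p) be the 3-partite pair-entangled-network state on the triangle (completely connected) graph, where each of the three parties A, B, C holds two qubits and each pair of parties shares a 2-dimensional isotropic state of visibility p. If p > (2√5 − 3)/3, then σ_cc(p) is genuinely multipartite entangled (i.e., not biseparable) with respect to the tripartition A|B|C. -/

import Mathlib

open scoped BigOperators

noncomputable section

/-- Projector onto the `d`-dimensional maximally entangled state
`|φ⁺_d⟩ = (1/√d) ∑ᵢ |ii⟩`, as a matrix on `ℂ^d ⊗ ℂ^d`. -/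
def phiPlus (d : ℕ) : Matrix (Fin d × Fin d) (Fin d × Fin d) ℂ :=
  fun x y => if x.1 = x.2 ∧ y.1 = y.2 then (1 / (d : ℂ)) else 0

/-- The `d`-dimensional isotropic state with visibility `p`:
`ρ(p) = p φ⁺_d + (1-p) 𝟙/d²`. -/
def iso (d : ℕ) (p : ℝ) : Matrix (Fin d × Fin d) (Fin d × Fin d) ℂ :=
  (p : ℂ) • phiPlus d +
    (((1 - p) / (d : ℝ) ^ 2 : ℝ) : ℂ) • (1 : Matrix (Fin d × Fin d) (Fin d × Fin d) ℂ)

/-- The (possibly unnormalized) projector `|ψ⟩⟨ψ|` onto a vector `ψ`. -/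
def vecProj {ι : Type} (ψ : ι → ℂ) : Matrix ι ι ℂ :=
  fun i j => ψ i * (starRingEnd ℂ) (ψ j)

/-- A pure tripartite vector factors across the bipartition `A|BC`. -/
def factorsA {α β γ : Type} (ψ : α × β × γ → ℂ) : Prop :=
  ∃ (f : α → ℂ) (g : β × γ → ℂ), ∀ a b c, ψ (a, b, c) = f a * g (b, c)

/-- A pure tripartite vector factors across the bipartition `B|AC`. -/
def factorsB {α β γ : Type} (ψ : α × β × γ → ℂ) : Prop :=
  ∃ (f : β → ℂ) (g : α × γ → ℂ), ∀ a b c, ψ (a, b, c) = f b * g (a, c)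

/-- A pure tripartite vector factors across the bipartition `C|AB`. -/
def factorsC {α β γ : Type} (ψ : α × β × γ → ℂ) : Prop :=
  ∃ (f : γ → ℂ) (g : α × β → ℂ), ∀ a b c, ψ (a, b, c) = f c * g (a, b)

/-- A tripartite density matrix (parties `A`, `B`, `C`) is biseparable if it is a finite
convex combination of projectors onto normalized pure states, each of which factors
across one of the three bipartitions `A|BC`, `B|AC`, `C|AB`. -/
def Bisep3 {α β γ : Type} [Fintype α] [Fintype β] [Fintype γ]
    (ρ : Matrix (α × β × γ) (α × β × γ) ℂ) : Prop :=
  ∃ (k : ℕ) (w : Fin k → ℝ) (ψ : Fin k → α × β × γ → ℂ),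
    (∀ t, 0 ≤ w t) ∧ (∑ t, w t = 1) ∧
    (∀ t, factorsA (ψ t) ∨ factorsB (ψ t) ∨ factorsC (ψ t)) ∧
    (∀ t, ∑ x, Complex.normSq (ψ t x) = 1) ∧
    ρ = ∑ t, (w t : ℂ) • vecProj (ψ t)

/-- The 3-partite triangle PEN state
`σ_cc(p) = ρ_{A₁B₁}(p) ⊗ ρ_{A₂C₁}(p) ⊗ ρ_{B₂C₂}(p)`.
Party `A` holds `(a₁, a₂)`, party `B` holds `(b₁, b₂)`, party `C` holds `(c₁, c₂)`;
the global index is `((a₁, a₂), (b₁, b₂), (c₁, c₂))`. -/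
def sigmaCC (d : ℕ) (p : ℝ) :
    Matrix ((Fin d × Fin d) × (Fin d × Fin d) × Fin d × Fin d)
           ((Fin d × Fin d) × (Fin d × Fin d) × Fin d × Fin d) ℂ :=
  fun x y =>
    iso d p (x.1.1, x.2.1.1) (y.1.1, y.2.1.1) *
      (iso d p (x.1.2, x.2.2.1) (y.1.2, y.2.2.1) *
        iso d p (x.2.1.2, x.2.2.2) (y.2.1.2, y.2.2.2))

/-!
Let `P_AB`, `P_AC`, `P_BC` be the projectors onto `φ⁺₂` on the three edges of the triangle and
`W = P_AB + P_AC + P_BC - P_AB P_AC - P_AB P_BC - P_AC P_BC - 3 P_AB P_AC P_BC`.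
Since `σ_cc(p)` is a product over the edges, `tr(W σ_cc(p)) = 3F(1 - F - F²)` with
`F = (3p + 1)/4` the fidelity of `ρ(p)` with `φ⁺₂`; this is negative as soon as
`F > (√5 - 1)/2`, i.e. `p > (2√5 - 3)/3`.

`W` is nonnegative on biseparable states. By the symmetry of the triangle it suffices to treat a
product vector `f_A ⊗ g_BC`. Split every `BC`-edge matrix occurring in `⟨W⟩` into its traceless
part and its trace. The trace parts of the `AB`- and `AC`-contractions cancel the `P_AB P_BC` and
`P_AC P_BC` terms; the traceless part of the `AB,AC`-contraction is the sum of two traceless parts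
of `AB`-contractions, which absorb it via `‖a + b‖² ≤ 2(‖a‖² + ‖b‖²)`. What is left is
`½ (‖f‖² ‖tr_BC g‖² - |⟨f̄, tr_BC g⟩|²) ≥ 0` by Cauchy–Schwarz.
-/

namespace TrianglePEN

open Complex Matrix

lemma normSq_sum_mul_le {ι : Type*} [Fintype ι] (u v : ι → ℂ) :
    normSq (∑ i, u i * v i) ≤ (∑ i, normSq (u i)) * ∑ i, normSq (v i) := by
  let x : EuclideanSpace ℂ ι := WithLp.toLp 2 fun i => (starRingEnd ℂ) (u i)
  let y : EuclideanSpace ℂ ι := WithLp.toLp 2 v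
  have hxy : inner ℂ x y = ∑ i, u i * v i := by
    simp [x, y, PiLp.inner_apply, mul_comm]
  have h := pow_le_pow_left₀ (norm_nonneg _) (norm_inner_le_norm (𝕜 := ℂ) x y) 2
  rw [hxy, mul_pow, EuclideanSpace.norm_sq_eq, EuclideanSpace.norm_sq_eq] at h
  simpa [x, y, Complex.normSq_eq_norm_sq] using h

lemma normSq_add_le (a b : ℂ) : normSq (a + b) ≤ 2 * (normSq a + normSq b) := by
  simp only [normSq_eq_norm_sq]
  exact (pow_le_pow_left₀ (norm_nonneg _) (norm_add_le a b) 2).trans add_sq_le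

section Frobenius

variable {m n : Type*} [Fintype m] [Fintype n]

def frobSq (X : Matrix m n ℂ) : ℝ := ∑ i, ∑ j, normSq (X i j)

lemma frobSq_nonneg (X : Matrix m n ℂ) : 0 ≤ frobSq X :=
  Finset.sum_nonneg fun _ _ => Finset.sum_nonneg fun _ _ => normSq_nonneg _

lemma frobSq_add_le (X Y : Matrix m n ℂ) : frobSq (X + Y) ≤ 2 * (frobSq X + frobSq Y) := by
  simp only [frobSq, ← Finset.sum_add_distrib, Finset.mul_sum]
  exact Finset.sum_le_sum fun i _ => Finset.sum_le_sum fun j _ => normSq_add_le _ _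

end Frobenius

def traceless (X : Matrix (Fin 2) (Fin 2) ℂ) : Matrix (Fin 2) (Fin 2) ℂ :=
  X - (X.trace / 2) • 1

lemma traceless_add (X Y : Matrix (Fin 2) (Fin 2) ℂ) :
    traceless (X + Y) = traceless X + traceless Y := by
  simp only [traceless, trace_add, add_div, add_smul]
  abel

lemma frobSq_eq_frobSq_traceless_add (X : Matrix (Fin 2) (Fin 2) ℂ) :
    frobSq X = frobSq (traceless X) + normSq X.trace / 2 := by
  simp [frobSq, traceless, trace_fin_two, Fin.sum_univ_two, normSq_apply]
  ring

lemma witnessForm_nonneg (X Y : Fin 2 → Fin 2 → Matrix (Fin 2) (Fin 2) ℂ) {K : ℝ}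
    (hK : normSq (X 0 0 + X 1 1).trace ≤ K) :
    0 ≤ (∑ i, ∑ j, frobSq (X i j) + ∑ i, ∑ j, frobSq (Y i j) + K) / 2
      - (frobSq (X 0 0 + X 1 1) + ∑ i, ∑ j, normSq (X i j).trace
          + ∑ i, ∑ j, normSq (Y i j).trace) / 4
      - 3 / 8 * normSq (X 0 0 + X 1 1).trace := by
  have hZ := frobSq_eq_frobSq_traceless_add (X 0 0 + X 1 1)
  have hZ₀ := frobSq_add_le (traceless (X 0 0)) (traceless (X 1 1))
  rw [traceless_add] at hZ
  simp only [Fin.sum_univ_two, frobSq_eq_frobSq_traceless_add (X _ _),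
    frobSq_eq_frobSq_traceless_add (Y _ _)]
  have hX₀₁ := frobSq_nonneg (traceless (X 0 1))
  have hX₁₀ := frobSq_nonneg (traceless (X 1 0))
  have hY := fun i j => frobSq_nonneg (traceless (Y i j))
  linarith [hY 0 0, hY 0 1, hY 1 0, hY 1 1]

section Contraction

variable {ι O I : Type} [Fintype O] [Fintype I]

def contraction (e : O → I → ι) : Matrix ι ι ℂ →ₗ[ℂ] ℂ where
  toFun M := ∑ o, ∑ i, ∑ j, M (e o i) (e o j)
  map_add' M N := by simp only [Matrix.add_apply, Finset.sum_add_distrib]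
  map_smul' c M := by simp only [Matrix.smul_apply, smul_eq_mul, Finset.mul_sum, RingHom.id_apply]

def contractionSq (e : O → I → ι) (ψ : ι → ℂ) : ℝ := ∑ o, normSq (∑ i, ψ (e o i))

lemma contraction_vecProj (e : O → I → ι) (ψ : ι → ℂ) :
    contraction e (vecProj ψ) = contractionSq e ψ := by
  simp only [contraction, contractionSq, vecProj, LinearMap.coe_mk, AddHom.coe_mk,
    ← Finset.mul_sum, ← Finset.sum_mul, ← map_sum, mul_conj, ofReal_sum]

end Contraction

abbrev Idx := (Fin 2 × Fin 2) × (Fin 2 × Fin 2) × Fin 2 × Fin 2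

/- Edge `AB` is carried by `(a₁, b₁)`, edge `AC` by `(a₂, c₁)`, edge `BC` by `(b₂, c₂)`.
`embE` identifies the two qubits of each edge in `E` (inner index) and lists the remaining
qubits (outer index), so that `contraction embE M = 2^|E| tr((⊗_{e ∈ E} φ⁺_e ⊗ 𝟙) M)`. -/
def embAB : (Fin 2 × Fin 2) × Fin 2 × Fin 2 → Fin 2 → Idx :=
  fun ((a₂, b₂), c) x => ((x, a₂), (x, b₂), c)
def embAC : (Fin 2 × Fin 2) × Fin 2 × Fin 2 → Fin 2 → Idx :=
  fun ((a₁, c₂), b) y => ((a₁, y), b, (y, c₂))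
def embBC : (Fin 2 × Fin 2) × Fin 2 × Fin 2 → Fin 2 → Idx :=
  fun (a, (b₁, c₁)) z => (a, (b₁, z), (c₁, z))
def embABAC : Fin 2 × Fin 2 → Fin 2 × Fin 2 → Idx :=
  fun (b₂, c₂) (x, y) => ((x, y), (x, b₂), (y, c₂))
def embABBC : Fin 2 × Fin 2 → Fin 2 × Fin 2 → Idx :=
  fun (a₂, c₁) (x, z) => ((x, a₂), (x, z), (c₁, z))
def embACBC : Fin 2 × Fin 2 → Fin 2 × Fin 2 → Idx :=
  fun (a₁, b₁) (y, z) => ((a₁, y), (b₁, z), (y, z))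
def embABACBC : Unit → Fin 2 × Fin 2 × Fin 2 → Idx :=
  fun _ (x, y, z) => ((x, y), (x, z), (y, z))

/-- `witness M = tr(W M)` for the operator `W` of the module docstring. -/
def witness : Matrix Idx Idx ℂ →ₗ[ℂ] ℂ :=
  (1 / 2 : ℂ) • (contraction embAB + contraction embAC + contraction embBC)
    - (1 / 4 : ℂ) • (contraction embABAC + contraction embABBC + contraction embACBC)
    - (3 / 8 : ℂ) • contraction embABACBC

def witnessPure (ψ : Idx → ℂ) : ℝ :=
  (contractionSq embAB ψ + contractionSq embAC ψ + contractionSq embBC ψ) / 2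
    - (contractionSq embABAC ψ + contractionSq embABBC ψ + contractionSq embACBC ψ) / 4
    - 3 / 8 * contractionSq embABACBC ψ

lemma witness_vecProj (ψ : Idx → ℂ) : witness (vecProj ψ) = witnessPure ψ := by
  simp only [witness, witnessPure, LinearMap.sub_apply, LinearMap.smul_apply,
    LinearMap.add_apply, contraction_vecProj, smul_eq_mul]
  push_cast
  ring

lemma witnessPure_nonneg_of_factorsA {ψ : Idx → ℂ} (h : factorsA ψ) : 0 ≤ witnessPure ψ := by
  obtain ⟨f, g, hfg⟩ := h
  let G : Fin 2 → Fin 2 → Matrix (Fin 2) (Fin 2) ℂ :=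
    fun b₁ c₁ => Matrix.of fun b₂ c₂ => g ((b₁, b₂), (c₁, c₂))
  -- the `BC`-edge matrices left after contracting `AB`, resp. `AC`, against `f`
  let X : Fin 2 → Fin 2 → Matrix (Fin 2) (Fin 2) ℂ := fun a₂ c₁ => ∑ x, f (x, a₂) • G x c₁
  let Y : Fin 2 → Fin 2 → Matrix (Fin 2) (Fin 2) ℂ := fun a₁ b₁ => ∑ y, f (a₁, y) • G b₁ y
  have hCS : normSq (X 0 0 + X 1 1).trace
      ≤ (∑ a, normSq (f a)) * ∑ bc : Fin 2 × Fin 2, normSq (G bc.1 bc.2).trace := by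
    convert normSq_sum_mul_le f fun bc => (G bc.1 bc.2).trace using 2
    simp only [X, trace_add, trace_smul, smul_eq_mul, Fintype.sum_prod_type, Fin.sum_univ_two]
    ring
  convert witnessForm_nonneg X Y hCS using 1
  simp only [witnessPure, contractionSq, embAB, embAC, embBC, embABAC, embABBC, embACBC,
    embABACBC, hfg, ← Finset.mul_sum, normSq_mul]
  simp only [Fin.sum_univ_two, Fin.isValue, Fintype.sum_prod_type, Prod.mk.eta,
    Finset.univ_unique, PUnit.default_eq_unit, Finset.sum_const, Finset.card_singleton, one_smul,
    frobSq, smul_of, of_add_of, of_apply, Pi.add_apply, Pi.smul_apply, smul_eq_mul, trace_fin_two,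
    Matrix.add_apply, X, G, Y]
  ring_nf

def swapAB (x : Idx) : Idx := (x.2.1, x.1, x.2.2.swap)

def swapAC (x : Idx) : Idx := (x.2.2.swap, x.2.1.swap, x.1.swap)

lemma witnessPure_comp_swapAB (ψ : Idx → ℂ) : witnessPure (ψ ∘ swapAB) = witnessPure ψ := by
  simp only [witnessPure, contractionSq, embAB, Function.comp_apply, swapAB, Fin.sum_univ_two,
    Fin.isValue, Fintype.sum_prod_type, Prod.swap_prod_mk, embAC, embBC, embABAC, Prod.mk.eta,
    embABBC, embACBC, Finset.univ_unique, PUnit.default_eq_unit, embABACBC, Finset.sum_const,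
    Finset.card_singleton, one_smul]
  ring_nf

lemma witnessPure_comp_swapAC (ψ : Idx → ℂ) : witnessPure (ψ ∘ swapAC) = witnessPure ψ := by
  simp only [witnessPure, contractionSq, embAB, Function.comp_apply, swapAC, Fin.sum_univ_two,
    Fin.isValue, Fintype.sum_prod_type, Prod.swap_prod_mk, embAC, embBC, embABAC, Prod.mk.eta,
    embABBC, embACBC, Finset.univ_unique, PUnit.default_eq_unit, embABACBC, Finset.sum_const,
    Finset.card_singleton, one_smul]
  ring_nf

lemma witnessPure_nonneg {ψ : Idx → ℂ} (h : factorsA ψ ∨ factorsB ψ ∨ factorsC ψ) :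
    0 ≤ witnessPure ψ := by
  rcases h with hA | ⟨f, g, hfg⟩ | ⟨f, g, hfg⟩
  · exact witnessPure_nonneg_of_factorsA hA
  · rw [← witnessPure_comp_swapAB]
    exact witnessPure_nonneg_of_factorsA
      ⟨f, fun bc => g (bc.1, bc.2.swap), fun a b c => hfg b a c.swap⟩
  · rw [← witnessPure_comp_swapAC]
    exact witnessPure_nonneg_of_factorsA
      ⟨f ∘ Prod.swap, fun bc => g (bc.2.swap, bc.1.swap), fun a b c => hfg c.swap b.swap a.swap⟩

lemma witness_sigmaCC (p : ℝ) :
    witness (sigmaCC 2 p)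
      = ((3 * ((3 * p + 1) / 4) * (1 - (3 * p + 1) / 4 - ((3 * p + 1) / 4) ^ 2) : ℝ) : ℂ) := by
  simp only [witness, one_div, contraction, embAB, Fin.sum_univ_two, Fin.isValue,
    Fintype.sum_prod_type, embAC, embBC, smul_add, embABAC, Prod.mk.eta, embABBC, embACBC,
    Finset.univ_unique, PUnit.default_eq_unit, embABACBC, Finset.sum_const, Finset.card_singleton,
    one_smul, LinearMap.sub_apply, LinearMap.add_apply, LinearMap.smul_apply, LinearMap.coe_mk,
    AddHom.coe_mk, sigmaCC, iso, coe_smul, Nat.cast_ofNat, ofReal_div, ofReal_sub, ofReal_one,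
    ofReal_pow, ofReal_ofNat, Matrix.add_apply, Matrix.smul_apply, phiPlus, and_self, ↓reduceIte,
    real_smul, one_apply_eq, smul_eq_mul, mul_one, ne_eq, Prod.mk.injEq, zero_ne_one,
    not_false_eq_true, one_apply_ne, mul_zero, add_zero, one_ne_zero, smul_zero, zero_add,
    ofReal_mul, ofReal_add]
  ring

end TrianglePEN

theorem sigmaCC_GME (p : ℝ) (hp : (2 * Real.sqrt 5 - 3) / 3 < p) :
    ¬ Bisep3 (sigmaCC 2 p) := by
  rintro ⟨k, w, ψ, hw, -, hψ, -, hσ⟩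
  set q := (3 * p + 1) / 4 with hq_def
  have hvalue : 3 * q * (1 - q - q ^ 2) = ∑ t, w t * TrianglePEN.witnessPure (ψ t) := by
    have h := TrianglePEN.witness_sigmaCC p
    rw [hσ, map_sum] at h
    simp only [map_smul, TrianglePEN.witness_vecProj, smul_eq_mul] at h
    exact_mod_cast h.symm
  have hnonneg : 0 ≤ ∑ t, w t * TrianglePEN.witnessPure (ψ t) :=
    Finset.sum_nonneg fun t _ => mul_nonneg (hw t) (TrianglePEN.witnessPure_nonneg (hψ t))
  have hsqrt5 : 1 < Real.sqrt 5 := by rw [Real.lt_sqrt] <;> norm_num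
  have hq : (Real.sqrt 5 - 1) / 2 < q := by rw [hq_def]; linarith
  have hfactor :
      1 - q - q ^ 2 = -((q - (Real.sqrt 5 - 1) / 2) * (q + (Real.sqrt 5 + 1) / 2)) := by
    linear_combination (-1 / 4 : ℝ) * Real.sq_sqrt (show (0 : ℝ) ≤ 5 by norm_num)
  have hneg : 3 * q * (1 - q - q ^ 2) < 0 := by
    rw [hfactor]
    exact mul_neg_of_pos_of_neg (by linarith)
      (neg_neg_of_pos (mul_pos (by linarith) (by linarith)))
  linarith
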